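/- Let ε ∈ (0,1], t ∈ [0,ε], ρ(y) = exp(y²/(8(1+t/ε))), ⟨ξ⟩ = (1+ξ²)^{1/2} and θ_ξ(y) = 1 − exp(−y²⟨ξ⟩²/(2(1+t/ε))). There is a universal constant C (independent of ξ, t, ε) such that the tail of the integral of 1−θ_ξ satisfies ‖ ρ(y) ∫_y^∞ (1−θ_ξ(y')) dy' ‖_{L²_y(0,∞)} ≤ C ⟨ξ⟩^{−3/2} for every ξ ∈ ℝ. -/
import Mathlib


open MeasureTheory Set Filter

noncomputable section

/-- Gaussian weight `ρ(y) = exp(y²/(8(1+t/ε)))`. -/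
def rho (ε t y : ℝ) : ℝ := Real.exp (y ^ 2 / (8 * (1 + t / ε)))

/-- Japanese bracket `⟨ξ⟩ = √(1+ξ²)`. -/
def brak (ξ : ℝ) : ℝ := Real.sqrt (1 + ξ ^ 2)

/-- Lift function `θ_ξ(y) = 1 − exp(−y²⟨ξ⟩²/(2(1+t/ε)))`. -/
def theta (ε t ξ y : ℝ) : ℝ :=
  1 - Real.exp (-(y ^ 2 * (1 + ξ ^ 2)) / (2 * (1 + t / ε)))

lemma aux_sqrt_mul_sqrt {x : ℝ} (hx : 0 < x) :
    Real.sqrt (x * Real.sqrt x) = x ^ ((3:ℝ)/4) := by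
  have h32 : x * Real.sqrt x = x ^ ((3:ℝ)/2) := by
    rw [Real.sqrt_eq_rpow, show (3:ℝ)/2 = 1 + 1/2 by norm_num, Real.rpow_add hx,
      Real.rpow_one]
  rw [h32, Real.sqrt_eq_rpow, ← Real.rpow_mul hx.le]
  norm_num

/-- **Bound (4.24) of the paper**: the tail of the integral of `1−θ_ξ` satisfies
`‖ρ(y) ∫_y^∞ (1−θ_ξ(y')) dy'‖_{L²_y(0,∞)} ≤ C ⟨ξ⟩^{−3/2}` with a universal
constant `C` independent of `ξ`, `t`, `ε`. -/
theorem tail_integral_one_minus_theta_L2_bound :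
    ∃ C : ℝ, 0 < C ∧ ∀ ε t ξ : ℝ, 0 < ε → ε ≤ 1 → 0 ≤ t → t ≤ ε →
      Real.sqrt (∫ y in Ioi (0 : ℝ),
          (rho ε t y * ∫ y' in Ioi y, (1 - theta ε t ξ y')) ^ 2)
        ≤ C * brak ξ ^ (-(3 : ℝ) / 2) := by
  have hπ : (0:ℝ) < Real.pi := Real.pi_pos
  refine ⟨(2 * Real.pi) ^ ((3:ℝ)/4), by positivity, ?_⟩
  intro ε t ξ hε hε1 ht htε
  set a : ℝ := 1 + t / ε with ha_def
  have hdiv : 0 ≤ t / ε := div_nonneg ht hε.le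
  have ha1 : 1 ≤ a := le_add_of_nonneg_right hdiv
  have ha0 : 0 < a := lt_of_lt_of_le one_pos ha1
  have ha2 : a ≤ 2 := by
    have : t / ε ≤ 1 := (div_le_one hε).mpr htε
    simp only [ha_def]; linarith
  set s : ℝ := 1 + ξ ^ 2 with hs_def
  have hs1 : 1 ≤ s := by nlinarith [sq_nonneg ξ]
  have hs0 : 0 < s := lt_of_lt_of_le one_pos hs1
  set b : ℝ := s / (2 * a) with hb_def
  have hb0 : 0 < b := by positivity
  -- rewrite 1 - theta as a Gaussian
  have hθ : ∀ y' : ℝ, 1 - theta ε t ξ y' = Real.exp (-b * y' ^ 2) := by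
    intro y'
    simp only [theta, sub_sub_cancel, hb_def, hs_def, ha_def]
    congr 1
    field_simp
  -- integrabilities
  have hInt : Integrable (fun x : ℝ => Real.exp (-b * x ^ 2)) := integrable_exp_neg_mul_sq hb0
  have hInt2 : Integrable (fun x : ℝ => Real.exp (-(b/2) * x ^ 2)) :=
    integrable_exp_neg_mul_sq (by positivity)
  -- pointwise tail bound
  have hM : (0:ℝ) ≤ Real.sqrt (Real.pi / (b/2)) / 2 := by positivity
  have htail : ∀ y : ℝ, 0 < y →
      (∫ y' in Ioi y, Real.exp (-b * y' ^ 2))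
        ≤ Real.exp (-(b/2) * y ^ 2) * (Real.sqrt (Real.pi / (b/2)) / 2) := by
    intro y hy
    have step1 : (∫ y' in Ioi y, Real.exp (-b * y' ^ 2))
        ≤ ∫ y' in Ioi y, Real.exp (-(b/2) * y ^ 2) * Real.exp (-(b/2) * y' ^ 2) := by
      refine setIntegral_mono_on hInt.integrableOn
        ((hInt2.const_mul _).integrableOn) measurableSet_Ioi ?_
      intro x hx
      rw [← Real.exp_add]
      apply Real.exp_le_exp.mpr
      have hx' : y ≤ x := le_of_lt hx
      nlinarith [hb0.le, mul_nonneg (sub_nonneg.2 hx') (by linarith : (0:ℝ) ≤ x + y), hb0]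
    have step2 : (∫ y' in Ioi y, Real.exp (-(b/2) * y ^ 2) * Real.exp (-(b/2) * y' ^ 2))
        = Real.exp (-(b/2) * y ^ 2) * ∫ y' in Ioi y, Real.exp (-(b/2) * y' ^ 2) :=
      integral_const_mul _ _
    have step3 : (∫ y' in Ioi y, Real.exp (-(b/2) * y' ^ 2))
        ≤ ∫ y' in Ioi (0:ℝ), Real.exp (-(b/2) * y' ^ 2) := by
      refine setIntegral_mono_set hInt2.integrableOn ?_
        (HasSubset.Subset.eventuallyLE (Ioi_subset_Ioi hy.le))
      filter_upwards with x using (Real.exp_pos _).le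
    have step4 : (∫ y' in Ioi (0:ℝ), Real.exp (-(b/2) * y' ^ 2))
        = Real.sqrt (Real.pi / (b/2)) / 2 := integral_gaussian_Ioi (b/2)
    calc (∫ y' in Ioi y, Real.exp (-b * y' ^ 2)) ≤ _ := step1
      _ = Real.exp (-(b/2) * y ^ 2) * ∫ y' in Ioi y, Real.exp (-(b/2) * y' ^ 2) := step2
      _ ≤ Real.exp (-(b/2) * y ^ 2) * (Real.sqrt (Real.pi / (b/2)) / 2) := by
          rw [← step4]; exact mul_le_mul_of_nonneg_left step3 (Real.exp_pos _).le
  -- pointwise bound on the squared integrand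
  have hg_int : Integrable (fun y : ℝ => (Real.pi * a / s) * Real.exp (-(s/(4*a)) * y ^ 2)) :=
    (integrable_exp_neg_mul_sq (by positivity)).const_mul _
  have hpt : ∀ y : ℝ, y ∈ Ioi (0:ℝ) →
      (rho ε t y * ∫ y' in Ioi y, (1 - theta ε t ξ y')) ^ 2
        ≤ (Real.pi * a / s) * Real.exp (-(s/(4*a)) * y ^ 2) := by
    intro y hy
    rw [show (∫ y' in Ioi y, (1 - theta ε t ξ y')) = ∫ y' in Ioi y, Real.exp (-b * y' ^ 2) by
      congr 1; ext y'; exact hθ y']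
    have hF0 : 0 ≤ ∫ y' in Ioi y, Real.exp (-b * y' ^ 2) :=
      setIntegral_nonneg measurableSet_Ioi (fun x _ => (Real.exp_pos _).le)
    have hrho : 0 < rho ε t y := Real.exp_pos _
    have h1 : rho ε t y * ∫ y' in Ioi y, Real.exp (-b * y' ^ 2)
        ≤ rho ε t y * (Real.exp (-(b/2) * y ^ 2) * (Real.sqrt (Real.pi / (b/2)) / 2)) :=
      mul_le_mul_of_nonneg_left (htail y hy) hrho.le
    have h2 : rho ε t y * Real.exp (-(b/2) * y ^ 2) ≤ Real.exp (-(s/(8*a)) * y ^ 2) := by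
      rw [rho, ← ha_def, ← Real.exp_add]
      apply Real.exp_le_exp.mpr
      have key : y ^ 2 / (8 * a) + -(b/2) * y ^ 2
          = y ^ 2 * (1 - s) / (8 * a) + -(s/(8*a)) * y ^ 2 := by
        rw [hb_def]; field_simp; ring
      rw [key]
      have hnp : y ^ 2 * (1 - s) / (8 * a) ≤ 0 :=
        div_nonpos_of_nonpos_of_nonneg (by nlinarith [sq_nonneg y]) (by positivity)
      linarith
    have h3 : rho ε t y * ∫ y' in Ioi y, Real.exp (-b * y' ^ 2)
        ≤ Real.exp (-(s/(8*a)) * y ^ 2) * (Real.sqrt (Real.pi / (b/2)) / 2) := by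
      calc rho ε t y * ∫ y' in Ioi y, Real.exp (-b * y' ^ 2) ≤ _ := h1
        _ = (rho ε t y * Real.exp (-(b/2) * y ^ 2)) * (Real.sqrt (Real.pi / (b/2)) / 2) := by
            ring
        _ ≤ Real.exp (-(s/(8*a)) * y ^ 2) * (Real.sqrt (Real.pi / (b/2)) / 2) :=
            mul_le_mul_of_nonneg_right h2 hM
    have hlhs0 : 0 ≤ rho ε t y * ∫ y' in Ioi y, Real.exp (-b * y' ^ 2) :=
      mul_nonneg hrho.le hF0
    calc (rho ε t y * ∫ y' in Ioi y, Real.exp (-b * y' ^ 2)) ^ 2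
        ≤ (Real.exp (-(s/(8*a)) * y ^ 2) * (Real.sqrt (Real.pi / (b/2)) / 2)) ^ 2 := by
          exact pow_le_pow_left₀ hlhs0 h3 2
      _ = (Real.pi * a / s) * Real.exp (-(s/(4*a)) * y ^ 2) := by
          rw [mul_pow, div_pow, Real.sq_sqrt (by positivity : (0:ℝ) ≤ Real.pi / (b/2)),
            ← Real.exp_nat_mul]
          rw [hb_def]
          have h4 : Real.pi / (s / (2*a) / 2) / 2 ^ 2 = Real.pi * a / s := by
            field_simp
          rw [h4]
          have h5 : (2:ℕ) * (-(s / (8 * a)) * y ^ 2) = -(s/(4*a)) * y ^ 2 := by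
            push_cast; field_simp; ring
          rw [h5]; ring
  -- integral bound
  have hint_le : (∫ y in Ioi (0 : ℝ),
      (rho ε t y * ∫ y' in Ioi y, (1 - theta ε t ξ y')) ^ 2)
      ≤ ∫ y in Ioi (0:ℝ), (Real.pi * a / s) * Real.exp (-(s/(4*a)) * y ^ 2) := by
    refine integral_mono_of_nonneg ?_ hg_int.integrableOn ?_
    · filter_upwards with x using sq_nonneg _
    · exact (ae_restrict_iff' measurableSet_Ioi).mpr (ae_of_all _ hpt)
  -- compute the Gaussian integral
  have hval : (∫ y in Ioi (0:ℝ), (Real.pi * a / s) * Real.exp (-(s/(4*a)) * y ^ 2))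
      = (Real.pi * a / s) * Real.sqrt (Real.pi * a / s) := by
    rw [integral_const_mul, integral_gaussian_Ioi]
    congr 1
    have h4 : Real.pi / (s / (4*a)) = 4 * (Real.pi * a / s) := by field_simp
    rw [h4, show (4:ℝ) = 2^2 by norm_num, Real.sqrt_mul (by positivity),
      Real.sqrt_sq (by norm_num : (0:ℝ) ≤ 2)]
    ring
  -- bound by a universal gaussian value
  have hx1 : Real.pi * a / s ≤ 2 * Real.pi / s := by
    apply (div_le_div_iff_of_pos_right hs0).mpr
    nlinarith
  have hmono : (Real.pi * a / s) * Real.sqrt (Real.pi * a / s)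
      ≤ (2 * Real.pi / s) * Real.sqrt (2 * Real.pi / s) :=
    mul_le_mul hx1 (Real.sqrt_le_sqrt hx1) (Real.sqrt_nonneg _) (by positivity)
  have hbrak : brak ξ ^ (-(3:ℝ)/2) = s ^ (-(3:ℝ)/4) := by
    have h1 : brak ξ = s ^ ((1:ℝ)/2) := by
      rw [brak, ← hs_def, Real.sqrt_eq_rpow]
    rw [h1, ← Real.rpow_mul hs0.le]
    norm_num
  calc Real.sqrt (∫ y in Ioi (0 : ℝ),
          (rho ε t y * ∫ y' in Ioi y, (1 - theta ε t ξ y')) ^ 2)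
      ≤ Real.sqrt ((2 * Real.pi / s) * Real.sqrt (2 * Real.pi / s)) := by
        apply Real.sqrt_le_sqrt
        calc _ ≤ _ := hint_le
          _ = (Real.pi * a / s) * Real.sqrt (Real.pi * a / s) := hval
          _ ≤ _ := hmono
    _ = (2 * Real.pi / s) ^ ((3:ℝ)/4) := aux_sqrt_mul_sqrt (by positivity)
    _ = (2 * Real.pi) ^ ((3:ℝ)/4) * brak ξ ^ (-(3:ℝ)/2) := by
        rw [hbrak, Real.div_rpow (by positivity) hs0.le,
          show ((-3:ℝ)/4) = -(3/4) by norm_num, Real.rpow_neg hs0.le, div_eq_mul_inv]
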